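/- arXiv:1509.04415 — 2 statements merged into one kernel-verified Lean document; each statement's English description precedes it below -/
import Mathlib

section
/- For every real number β with β < −1/2, the polynomial q_β has three distinct real roots, two of them smaller than −1/2 and one larger than 1/2: there exist real numbers λ₁ < λ₂ < −1/2 and λ₃ > 1/2 with q_β(λ₁) = q_β(λ₂) = q_β(λ₃) = 0. -/
/-!
Evaluate `q_β` at the points `3β < 2β < -1/2 < 1/2 < 1`: the values are `β`, `β (1 - 2β) (1 + 2β)`,
`(2β - 1) / 8`, `(2β + 1) / 8` and `1 - 2β`, whose signs for `β < -1/2` are `-, +, -, -, +`.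
The intermediate value theorem then puts a root in each of `(3β, 2β)`, `(2β, -1/2)` and `(1/2, 1)`.
-/

open Set

def q (β x : ℝ) : ℝ := x ^ 3 - 3 * β * x ^ 2 + β

section

variable (β : ℝ)

theorem continuous_q : Continuous (q β) := by
  unfold q; fun_prop

theorem q_three_mul : q β (3 * β) = β := by
  unfold q; ring

theorem q_two_mul : q β (2 * β) = β * (1 - 2 * β) * (1 + 2 * β) := by
  unfold q; ring

theorem q_neg_half : q β (-(1 / 2)) = (2 * β - 1) / 8 := by
  unfold q; ring

theorem q_half : q β (1 / 2) = (2 * β + 1) / 8 := by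
  unfold q; ring

theorem q_one : q β 1 = 1 - 2 * β := by
  unfold q; ring

end

theorem q_beta_three_roots_neg (β : ℝ) (hβ : β < -(1/2)) :
    ∃ l₁ l₂ l₃ : ℝ, l₁ < l₂ ∧ l₂ < -(1/2) ∧ 1/2 < l₃ ∧
      l₁^3 - 3 * β * l₁^2 + β = 0 ∧
      l₂^3 - 3 * β * l₂^2 + β = 0 ∧
      l₃^3 - 3 * β * l₃^2 + β = 0 := by
  have hq (a b : ℝ) : ContinuousOn (q β) (Icc a b) := (continuous_q β).continuousOn
  have h₁ : q β (3 * β) < 0 := by rw [q_three_mul]; linarith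
  have h₂ : 0 < q β (2 * β) := by
    rw [q_two_mul]
    exact mul_pos_of_neg_of_neg (mul_neg_of_neg_of_pos (by linarith) (by linarith)) (by linarith)
  have h₃ : q β (-(1 / 2)) < 0 := by rw [q_neg_half]; linarith
  have h₄ : q β (1 / 2) < 0 := by rw [q_half]; linarith
  have h₅ : 0 < q β 1 := by rw [q_one]; linarith
  obtain ⟨l₁, ⟨-, hl₁⟩, hql₁⟩ := intermediate_value_Ioo (by linarith) (hq _ _) ⟨h₁, h₂⟩
  obtain ⟨l₂, ⟨hl₁₂, hl₂⟩, hql₂⟩ := intermediate_value_Ioo' (by linarith) (hq _ _) ⟨h₃, h₂⟩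
  obtain ⟨l₃, ⟨hl₃, -⟩, hql₃⟩ := intermediate_value_Ioo (by norm_num) (hq _ _) ⟨h₄, h₅⟩
  exact ⟨l₁, l₂, l₃, hl₁.trans hl₁₂, hl₂, hl₃, hql₁, hql₂, hql₃⟩
end

section
/- Let ρ be a positive real number with ρ ≠ 1 and set β = (ρ+1)/(2(ρ−1)). Define the 2×2 matrices over A: CFK₀ = [[−2K, ((ρ+1)/ρ)·S], [−(1+ρ)·N, 2K']], CFK₀ᵗ = [[2K, −((ρ+1)/ρ)·S], [(1+ρ)·N, −2K']], R₀ = (1/(ρ+1))·[[1, 2S], [−2ρ·N, ρ·1]], and R₀ᵗ = (1/(ρ+1))·[[ρ·1, −2S], [2ρ·N, 1]]. Then R₀ᵗ · R₀ = (4ρ/(ρ+1)²) · diag(K², K'²), and consequently CFK₀ᵗ · R₀ᵗ · R₀ · CFK₀ = (4(ρ−1)²/(ρ+1)²) · diag(K²·(K − β·1)(K + β·1), K'²·(K' − β·1)(K' + β·1)). -/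
/-!
Write `D = diag(K², K'²)`. The intertwining relations `N K = K' N`, `K S = S K'` make `D` commute
with `CFK₀`, and `CFK₀ᵗ = -CFK₀`, so `CFK₀ᵗ (R₀ᵗ R₀) CFK₀ = -(4ρ/(ρ+1)²) D CFK₀²`. By the same
relations the off-diagonal entries of `CFK₀²` cancel, and the Calderón identities for `S N` and
`N S` turn its diagonal into a polynomial in `D`: `CFK₀² = (4 - p) D + (p/4)` with
`p = (ρ+1)²/ρ`. Then `-(4ρ/(ρ+1)²) D CFK₀² = (4(ρ-1)²/(ρ+1)²) D (D - β²)`, which factors as stated.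
-/

theorem Matrix.of_fin_two_congr {α : Type*} {a b c d a' b' c' d' : α}
    (ha : a = a') (hb : b = b') (hc : c = c') (hd : d = d') :
    !![a, b; c, d] = !![a', b'; c', d'] := by
  subst_vars; rfl

theorem sub_smul_one_mul_add_smul_one {R A : Type*} [CommRing R] [Ring A] [Algebra R A]
    (K : A) (β : R) : (K - β • 1) * (K + β • 1) = K ^ 2 - β ^ 2 • 1 := by
  have hK : Commute K (β • 1) := (Commute.one_right K).smul_right β
  rw [← hK.mul_self_sub_mul_self_eq', sq, sq, smul_mul_smul_comm, one_mul]

namespace Calderon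

variable {𝕜 A : Type*} [Field 𝕜] [Ring A] [Algebra 𝕜 A] {S N K K' : A}

theorem r0t_mul_r0 [CharZero 𝕜] (hSN : S * N = -(1/4 : 𝕜) • (1 : A) + K ^ 2)
    (hNS : N * S = -(1/4 : 𝕜) • (1 : A) + K' ^ 2) (ρ : 𝕜) :
    !![ρ • (1 : A), -(2 : 𝕜) • S; (2*ρ) • N, (1 : A)] *
        !![(1 : A), (2 : 𝕜) • S; -(2*ρ) • N, ρ • (1 : A)] =
      (4*ρ) • !![K ^ 2, 0; 0, K' ^ 2] := by
  rw [Matrix.mul_fin_two, Matrix.smul_of]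
  simp only [Matrix.smul_cons, Matrix.smul_empty, smul_zero]
  refine Matrix.of_fin_two_congr ?_ ?_ ?_ ?_ <;>
    simp only [smul_mul_assoc, mul_smul_comm, smul_smul, one_mul, mul_one, hSN, hNS] <;> module

theorem cfk0_mul_self [CharZero 𝕜] (hSN : S * N = -(1/4 : 𝕜) • (1 : A) + K ^ 2)
    (hNS : N * S = -(1/4 : 𝕜) • (1 : A) + K' ^ 2) (hNK : N * K = K' * N) (hKS : K * S = S * K')
    (a b : 𝕜) :
    !![-(2 : 𝕜) • K, a • S; -b • N, (2 : 𝕜) • K'] * !![-(2 : 𝕜) • K, a • S; -b • N, (2 : 𝕜) • K'] =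
      (4 - a * b) • !![K ^ 2, 0; 0, K' ^ 2] + (a * b / 4) • 1 := by
  rw [Matrix.mul_fin_two, Matrix.one_fin_two, Matrix.smul_of, Matrix.smul_of, Matrix.of_add_of]
  simp only [Matrix.smul_cons, Matrix.smul_empty, smul_zero, Matrix.cons_add_cons,
    Matrix.empty_add_empty]
  refine Matrix.of_fin_two_congr ?_ ?_ ?_ ?_ <;>
    simp only [smul_mul_assoc, mul_smul_comm, smul_smul, hSN, hNS, hKS, hNK, sq] <;> module

theorem commute_diag_sq_cfk0 (hNK : N * K = K' * N) (hKS : K * S = S * K') (a b : 𝕜) :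
    Commute !![K ^ 2, 0; 0, K' ^ 2] !![-(2 : 𝕜) • K, a • S; -b • N, (2 : 𝕜) • K'] := by
  have hS : K ^ 2 * S = S * K' ^ 2 := (SemiconjBy.pow_right (x := K') (y := K) hKS.symm 2).symm
  have hN : N * K ^ 2 = K' ^ 2 * N := SemiconjBy.pow_right (x := K) (y := K') hNK 2
  rw [Commute, SemiconjBy, Matrix.mul_fin_two, Matrix.mul_fin_two]
  refine Matrix.of_fin_two_congr ?_ ?_ ?_ ?_ <;>
    simp only [zero_mul, mul_zero, smul_zero, add_zero, zero_add, mul_smul_comm, smul_mul_assoc,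
      hS, hN, (Commute.self_pow K 2).eq, (Commute.self_pow K' 2).eq]

end Calderon

theorem R0t_R0_and_CFK0t_R0t_R0_CFK0 (A : Type*) [Ring A] [Algebra ℝ A]
    (S N K K' : A)
    (hSN : S * N = -(1/4 : ℝ) • (1 : A) + K ^ 2)
    (hNS : N * S = -(1/4 : ℝ) • (1 : A) + K' ^ 2)
    (hNK : N * K = K' * N)
    (hKS : K * S = S * K')
    (ρ : ℝ) (hρ : 0 < ρ) (hρ1 : ρ ≠ 1)
    (β : ℝ) (hβ : β = (ρ + 1) / (2 * (ρ - 1)))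
    (CFK₀ CFK₀t R₀ R₀t : Matrix (Fin 2) (Fin 2) A)
    (hCFK₀ : CFK₀ = !![-(2 : ℝ) • K, ((ρ + 1)/ρ) • S; -(1 + ρ) • N, (2 : ℝ) • K'])
    (hCFK₀t : CFK₀t = !![(2 : ℝ) • K, -((ρ + 1)/ρ) • S; (1 + ρ) • N, -(2 : ℝ) • K'])
    (hR₀ : R₀ = (1/(ρ + 1)) • !![(1 : A), (2 : ℝ) • S; -(2*ρ) • N, ρ • (1 : A)])
    (hR₀t : R₀t = (1/(ρ + 1)) • !![ρ • (1 : A), -(2 : ℝ) • S; (2*ρ) • N, (1 : A)]) :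
    R₀t * R₀ = (4*ρ/(ρ + 1)^2) • !![K ^ 2, 0; 0, K' ^ 2] ∧
    CFK₀t * R₀t * R₀ * CFK₀ =
      (4*(ρ - 1)^2/(ρ + 1)^2) •
        !![K ^ 2 * ((K - β • (1 : A)) * (K + β • (1 : A))), 0;
           0, K' ^ 2 * ((K' - β • (1 : A)) * (K' + β • (1 : A)))] := by
  have hρ0 : ρ ≠ 0 := hρ.ne'
  have hρ1' : ρ + 1 ≠ 0 := by positivity
  have hρm : ρ - 1 ≠ 0 := sub_ne_zero.mpr hρ1
  set D : Matrix (Fin 2) (Fin 2) A := !![K ^ 2, 0; 0, K' ^ 2] with hD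
  have hR : R₀t * R₀ = (4*ρ/(ρ + 1)^2) • D := by
    rw [hR₀t, hR₀, smul_mul_smul_comm, Calderon.r0t_mul_r0 hSN hNS, smul_smul]
    congr 1
    field_simp
  refine ⟨hR, ?_⟩
  have hCFK₀t_eq_neg : CFK₀t = -CFK₀ := by
    rw [hCFK₀t, hCFK₀, Matrix.neg_of]
    simp only [Matrix.neg_cons, Matrix.neg_empty, neg_smul, neg_neg]
  have hcomm : CFK₀ * D = D * CFK₀ := by
    rw [hCFK₀]; exact (Calderon.commute_diag_sq_cfk0 hNK hKS _ _).eq.symm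
  have hsq : CFK₀ * CFK₀ =
      (4 - (ρ + 1) / ρ * (1 + ρ)) • D + ((ρ + 1) / ρ * (1 + ρ) / 4) • 1 := by
    rw [hCFK₀]; exact Calderon.cfk0_mul_self hSN hNS hNK hKS _ _
  have hdiag : !![K ^ 2 * ((K - β • (1 : A)) * (K + β • (1 : A))), 0;
      0, K' ^ 2 * ((K' - β • (1 : A)) * (K' + β • (1 : A)))] = D * (D - β ^ 2 • 1) := by
    rw [sub_smul_one_mul_add_smul_one, sub_smul_one_mul_add_smul_one]
    ext i j
    fin_cases i <;> fin_cases j <;> simp [hD, Matrix.mul_apply]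
  calc CFK₀t * R₀t * R₀ * CFK₀ = -(4 * ρ / (ρ + 1) ^ 2) • (D * (CFK₀ * CFK₀)) := by
        rw [mul_assoc CFK₀t, hR, hCFK₀t_eq_neg, neg_mul, mul_smul_comm, hcomm, neg_mul,
          smul_mul_assoc, mul_assoc, neg_smul]
    _ = (4 * (ρ - 1) ^ 2 / (ρ + 1) ^ 2) • (D * (D - β ^ 2 • 1)) := by
        rw [hsq]
        simp only [mul_add, mul_sub, mul_smul_comm, mul_one]
        subst hβ
        match_scalars <;> field_simp <;> ring
    _ = _ := by rw [hdiag]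
end
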